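/- Suppose d is odd and η(e0) = η(e1) = η(e2) = -1. Then the number of points (x0 : x1 : x2) ∈ ℙ²(F_q) with C(x0, x1, x2) = 0 equals (3q² - 6q + 63)/8; equivalently, writing n = (q-7)/2 for the degree of the nonlinear part of C, it equals n(n + q - 1)/2 + 3q. -/

import Mathlib

/-!
Put `yᵢ = eᵢ vᵢ`. Since `x ^ d = η x` in `F_q` and `η eᵢ = -1`, the value `C(v)` is the image
in `F_q` of the integer `η(y₀ + y₁ + y₂) - η y₀ - η y₁ - η y₂ ∈ [-4, 4]`, so for `p > 4` the
affine equation `C = 0` becomes `Z_w(y₀) = Z_w(-y₂)`, where `w = y₀ + y₁` and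
`Z_w(t) = η t + η (w - t) = lineCharSum w t` (using `η (-1) = -1`, i.e. `q ≡ 3 mod 4`).
The affine zeros are therefore counted by `∑_w #{(t, z) | Z_w t = Z_w z}`. For `w = 0` all
`q²` pairs count, and for `w ≠ 0` the substitution `t = w u` reduces to `w = 1`. There the
fibre sizes of `Z₁` are pinned down by `∑ Z₁ = 0`, by `∑ Z₁² = 2q` (the Jacobi sum
`J(η, η) = -η(-1)` equals `1`) and by `Z₁ = 1` exactly at `u = 0, 1`. Finally, the affine
zeros other than `0` are `q - 1` times the projective ones.
-/

open MvPolynomial Finset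
open scoped LinearAlgebra.Projectivization

/-- The polynomial `C = X0^d + X1^d + X2^d + (e0·X0 + e1·X1 + e2·X2)^d` over `F_q`. -/
noncomputable def fermatSlice (F : Type) [Field F] (d : ℕ) (e0 e1 e2 : F) :
    MvPolynomial (Fin 3) F :=
  X 0 ^ d + X 1 ^ d + X 2 ^ d +
    (MvPolynomial.C e0 * X 0 + MvPolynomial.C e1 * X 1 + MvPolynomial.C e2 * X 2) ^ d

theorem Projectivization.card_filter_eq_card_rep_mul_add_one {k V : Type*} [Field k]
    [AddCommGroup V] [Module k V] [Fintype V] (P : V → Prop) [DecidablePred P] (h0 : P 0)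
    (hP : ∀ (c : k) (v : V), c ≠ 0 → (P (c • v) ↔ P v)) :
    #{v | P v} = Nat.card {x : ℙ k V // P x.rep} * (Nat.card k - 1) + 1 := by
  classical
  have hnonzero : Nat.card {v : {v : V // v ≠ 0} // P v} =
      Nat.card {x : ℙ k V // P x.rep} * (Nat.card k - 1) := by
    rw [← Nat.card_units, ← Nat.card_prod]
    refine Nat.card_congr ((Equiv.subtypeEquiv (nonZeroEquivProjectivizationProdUnits k V)
      fun v => ?_).trans Equiv.prodSubtypeFstEquivSubtypeProd)
    obtain ⟨a, ha⟩ := exists_smul_eq_mk_rep k v.1 v.2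
    change P v ↔ P (mk k v.1 v.2).rep
    rw [← ha, Units.smul_def, hP _ _ a.ne_zero]
  rw [← hnonzero, Nat.card_congr (Equiv.subtypeSubtypeEquivSubtypeInter _ P),
    Nat.card_eq_fintype_card, Fintype.card_subtype,
    ← card_erase_add_one (mem_filter.mpr ⟨mem_univ _, h0⟩)]
  congr 2
  ext v
  simp [and_comm]

theorem Finset.sum_comp_eq_sum_card_fiber_mul {α β R : Type*} [Fintype α] [DecidableEq β]
    [CommSemiring R] (f : α → β) (t : Finset β) (hf : ∀ a, f a ∈ t) (g : β → R) :
    ∑ a, g (f a) = ∑ b ∈ t, #{a | f a = b} * g b := by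
  rw [← sum_fiberwise_of_maps_to (fun a _ => hf a)]
  refine sum_congr rfl fun b _ => ?_
  rw [sum_congr rfl fun a ha => by rw [(mem_filter.mp ha).2], sum_const, nsmul_eq_mul]

theorem Finset.card_filter_eq_sum_card_fiber_sq {α β : Type*} [Fintype α] [DecidableEq β]
    (f : α → β) (t : Finset β) (hf : ∀ a, f a ∈ t) :
    #{x : α × α | f x.1 = f x.2} = ∑ b ∈ t, #{a | f a = b} ^ 2 := by
  have := sum_comp_eq_sum_card_fiber_mul f t hf fun b => #{a | f a = b}
  simp only [Nat.cast_id, ← sq] at this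
  rw [← this, card_filter, Fintype.sum_prod_type]
  simp_rw [card_filter, eq_comm]

lemma ringChar_eq_of_card_eq_pow {F : Type*} [Field F] [Fintype F] {p h : ℕ} (hp : p.Prime)
    (hcard : Fintype.card F = p ^ h) : ringChar F = p := by
  have hzero : (p : F) ^ h = 0 := by exact_mod_cast hcard ▸ FiniteField.cast_card_eq_zero F
  exact (Nat.prime_dvd_prime_iff_eq (CharP.char_is_prime F (ringChar F)) hp).mp
    (ringChar.dvd (pow_eq_zero_iff'.mp hzero).1)

lemma intCast_eq_zero_iff_of_natAbs_lt {R : Type*} [Ring R] {m : ℤ}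
    (hm : m.natAbs < ringChar R) : (m : R) = 0 ↔ m = 0 := by
  rw [CharP.intCast_eq_zero_iff R (ringChar R)]
  exact ⟨fun h => Int.eq_zero_of_dvd_of_natAbs_lt_natAbs h (by simpa using hm),
    fun h => h ▸ dvd_zero _⟩

section QuadraticChar

variable {F : Type*} [Field F] [Fintype F] [DecidableEq F]

local notation "η" => quadraticChar F
local notation "q" => (Fintype.card F : ℤ)

lemma ringChar_ne_two_of_quadraticChar_neg_one (hneg : η (-1) = -1) : ringChar F ≠ 2 := by
  intro h
  rw [neg_one_eq_one_iff.mpr h, map_one] at hneg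
  norm_num at hneg

lemma quadraticChar_neg_of_neg_one (hneg : η (-1) = -1) (a : F) : η (-a) = -η a := by
  rw [neg_eq_neg_one_mul, map_mul, hneg, neg_one_mul]

lemma quadraticChar_eq_neg_one_of_pow (hF : ringChar F ≠ 2) {a : F}
    (ha : a ^ (Fintype.card F / 2) = -1) : η a = -1 := by
  have hne : (-1 : F) ≠ 1 := fun h => hF (neg_one_eq_one_iff.mp h)
  have ha0 : a ≠ 0 := by
    rintro rfl
    rw [zero_pow (Nat.div_pos Fintype.one_lt_card two_pos).ne'] at ha
    exact hne (by simpa using congrArg Neg.neg ha)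
  rw [quadraticChar_eq_pow_of_char_ne_two hF ha0, ha, if_neg hne]

lemma sum_quadraticChar_sq : ∑ a : F, η a ^ 2 = q - 1 := by
  rw [← sum_erase_add _ _ (mem_univ 0),
    sum_congr rfl fun a ha => quadraticChar_sq_one (ne_of_mem_erase ha)]
  simp [Nat.cast_sub Fintype.card_pos]

def lineCharSum (w t : F) : ℤ := η t + η (w - t)

lemma lineCharSum_mem (w t : F) : lineCharSum w t ∈ ({-2, -1, 0, 1, 2} : Finset ℤ) := by
  have := quadraticChar_isQuadratic F t
  have := quadraticChar_isQuadratic F (w - t)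
  simp only [lineCharSum, mem_insert, mem_singleton]
  omega

lemma lineCharSum_zero_left (hneg : η (-1) = -1) (t : F) : lineCharSum 0 t = 0 := by
  rw [lineCharSum, zero_sub, quadraticChar_neg_of_neg_one hneg, add_neg_cancel]

lemma lineCharSum_mul_right (w u : F) : lineCharSum w (w * u) = η w * lineCharSum 1 u := by
  rw [lineCharSum, lineCharSum, ← mul_one_sub, map_mul, map_mul, mul_add]

lemma lineCharSum_one_zero : lineCharSum (1 : F) 0 = 1 := by simp [lineCharSum]

lemma lineCharSum_one_one : lineCharSum (1 : F) 1 = 1 := by simp [lineCharSum]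

lemma lineCharSum_one_of_ne {u : F} (h0 : u ≠ 0) (h1 : u ≠ 1) :
    lineCharSum 1 u = -2 ∨ lineCharSum 1 u = 0 ∨ lineCharSum 1 u = 2 := by
  have := quadraticChar_dichotomy h0
  have := quadraticChar_dichotomy (sub_ne_zero.mpr h1.symm)
  unfold lineCharSum
  omega

lemma card_lineCharSum_one_eq_one : #{u : F | lineCharSum 1 u = 1} = 2 := by
  rw [← card_pair (zero_ne_one' F)]
  congr 1
  ext u
  simp only [mem_filter, mem_univ, true_and, mem_insert, mem_singleton]
  refine ⟨fun h => ?_, ?_⟩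
  · by_contra! hu
    have := lineCharSum_one_of_ne hu.1 hu.2
    omega
  · rintro (rfl | rfl)
    exacts [lineCharSum_one_zero, lineCharSum_one_one]

lemma card_lineCharSum_one_eq_neg_one : #{u : F | lineCharSum 1 u = -1} = 0 := by
  refine card_eq_zero.mpr (filter_eq_empty_iff.mpr fun u _ => ?_)
  rcases eq_or_ne u 0 with rfl | h0
  · simp [lineCharSum_one_zero]
  rcases eq_or_ne u 1 with rfl | h1
  · simp [lineCharSum_one_one]
  have := lineCharSum_one_of_ne h0 h1
  omega

lemma sum_lineCharSum_one (hF : ringChar F ≠ 2) : ∑ u : F, lineCharSum 1 u = 0 := by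
  simp only [lineCharSum, sum_add_distrib,
    Fintype.sum_equiv (Equiv.subLeft 1) (fun u => η (1 - u)) η fun _ => rfl,
    quadraticChar_sum_zero hF, add_zero]

lemma sum_lineCharSum_one_sq (hneg : η (-1) = -1) : ∑ u : F, lineCharSum 1 u ^ 2 = 2 * q := by
  have hjac : ∑ u : F, η u * η (1 - u) = 1 := by
    have := jacobiSum_nontrivial_inv
      (quadraticChar_ne_one (ringChar_ne_two_of_quadraticChar_neg_one hneg))
    rwa [(quadraticChar_isQuadratic F).inv, hneg, neg_neg] at this
  have hsq : ∑ u : F, η (1 - u) ^ 2 = q - 1 := by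
    rw [Fintype.sum_equiv (Equiv.subLeft 1) (fun u => η (1 - u) ^ 2) (η · ^ 2) fun _ => rfl,
      sum_quadraticChar_sq]
  calc ∑ u : F, lineCharSum 1 u ^ 2
      = ∑ u : F, η u ^ 2 + ∑ u : F, η (1 - u) ^ 2 + 2 * ∑ u : F, η u * η (1 - u) := by
        simp only [lineCharSum, mul_sum, ← sum_add_distrib]
        exact sum_congr rfl fun _ _ => by ring
    _ = 2 * q := by rw [sum_quadraticChar_sq, hsq, hjac]; ring

lemma card_lineCharSum_one_collisions (hneg : η (-1) = -1) :
    16 * (#{x : F × F | lineCharSum 1 x.1 = lineCharSum 1 x.2} : ℤ) =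
      6 * q ^ 2 - 28 * q + 110 := by
  set P : ℤ → ℤ := fun k => #{u : F | lineCharSum 1 u = k}
  have hmem := lineCharSum_mem (1 : F)
  have moment (g : ℤ → ℤ) :
      ∑ u : F, g (lineCharSum 1 u) = ∑ k ∈ {-2, -1, 0, 1, 2}, P k * g k :=
    sum_comp_eq_sum_card_fiber_mul _ _ hmem g
  have h0 := moment 1
  have h1 := moment id
  have h2 := moment (· ^ 2)
  have hQ : (#{x : F × F | lineCharSum 1 x.1 = lineCharSum 1 x.2} : ℤ) =
      ∑ k ∈ {-2, -1, 0, 1, 2}, P k ^ 2 := by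
    rw [card_filter_eq_sum_card_fiber_sq _ _ hmem]
    push_cast
    rfl
  simp only [Pi.one_apply, id, mul_one, sum_const, card_univ, nsmul_eq_mul,
    sum_lineCharSum_one (ringChar_ne_two_of_quadraticChar_neg_one hneg),
    sum_lineCharSum_one_sq hneg] at h0 h1 h2
  simp only [sum_insert, mem_insert, mem_singleton, sum_singleton, Int.reduceEq, Int.reduceNeg,
    or_self, not_false_eq_true] at h0 h1 h2 hQ
  have hP1 : P 1 = 2 := by simp only [P, card_lineCharSum_one_eq_one]; rfl
  have hPm1 : P (-1) = 0 := by simp only [P, card_lineCharSum_one_eq_neg_one]; rfl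
  rw [hP1, hPm1] at h0 h1 h2 hQ
  -- the moments force `P 0 = (q - 3) / 2`, `P 2 = (q - 3) / 4` and `P (-2) = (q + 1) / 4`
  have hP2 : P 2 = P (-2) - 1 := by linarith
  have hP0 : P 0 = q - 1 - 2 * P (-2) := by linarith
  have hPm2 : 4 * P (-2) = q + 1 := by linarith
  rw [hQ, hP2, hP0]
  linear_combination (24 * P (-2) - 10 * q + 14) * hPm2

lemma card_lineCharSum_collisions_of_ne_zero {w : F} (hw : w ≠ 0) :
    #{x : F × F | lineCharSum w x.1 = lineCharSum w x.2} =
      #{x : F × F | lineCharSum 1 x.1 = lineCharSum 1 x.2} := by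
  have hηw : η w ≠ 0 := mt quadraticChar_eq_zero_iff.mp hw
  refine card_nbij' (fun x => (w⁻¹ * x.1, w⁻¹ * x.2)) (fun x => (w * x.1, w * x.2))
    ?_ ?_ ?_ ?_
  · intro x hx
    simp only [coe_filter, mem_univ, true_and, Set.mem_ofPred_eq] at hx ⊢
    rwa [← mul_right_inj' hηw, ← lineCharSum_mul_right, ← lineCharSum_mul_right,
      mul_inv_cancel_left₀ hw, mul_inv_cancel_left₀ hw]
  · intro x hx
    simp only [coe_filter, mem_univ, true_and, Set.mem_ofPred_eq] at hx ⊢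
    rw [lineCharSum_mul_right, lineCharSum_mul_right, hx]
  · intro x _
    simp [hw]
  · intro x _
    simp [hw]

lemma card_lineCharSum_collisions (hneg : η (-1) = -1) :
    16 * (#{x : F × F × F | lineCharSum x.1 x.2.1 = lineCharSum x.1 x.2.2} : ℤ) =
      16 * q ^ 2 + (q - 1) * (6 * q ^ 2 - 28 * q + 110) := by
  have hfiber : #{x : F × F × F | lineCharSum x.1 x.2.1 = lineCharSum x.1 x.2.2} =
      ∑ w : F, #{x : F × F | lineCharSum w x.1 = lineCharSum w x.2} := by
    simp only [card_filter, Fintype.sum_prod_type]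
  rw [hfiber, ← add_sum_erase _ _ (mem_univ 0),
    sum_congr rfl fun w hw => card_lineCharSum_collisions_of_ne_zero (ne_of_mem_erase hw)]
  simp only [lineCharSum_zero_left hneg, filter_true, sum_const, card_erase_of_mem (mem_univ _),
    card_univ, Fintype.card_prod, smul_eq_mul]
  push_cast [Nat.cast_sub Fintype.card_pos]
  linear_combination (q - 1) * card_lineCharSum_one_collisions hneg

end QuadraticChar

section FermatSlice

variable {F : Type} [Field F] {d : ℕ} {e0 e1 e2 : F}

lemma eval_fermatSlice (v : Fin 3 → F) : eval v (fermatSlice F d e0 e1 e2) =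
    v 0 ^ d + v 1 ^ d + v 2 ^ d + (e0 * v 0 + e1 * v 1 + e2 * v 2) ^ d := by
  simp [fermatSlice]

lemma eval_smul_fermatSlice (c : F) (v : Fin 3 → F) :
    eval (c • v) (fermatSlice F d e0 e1 e2) = c ^ d * eval v (fermatSlice F d e0 e1 e2) := by
  simp only [eval_fermatSlice, Pi.smul_apply, smul_eq_mul]
  rw [show e0 * (c * v 0) + e1 * (c * v 1) + e2 * (c * v 2) =
    c * (e0 * v 0 + e1 * v 1 + e2 * v 2) by ring]
  simp only [mul_pow]
  ring

variable [Fintype F] [DecidableEq F]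

local notation "η" => quadraticChar F

lemma eval_fermatSlice_eq_zero_iff (hF : 4 < ringChar F) (hd : Fintype.card F / 2 = d)
    (hneg : η (-1) = -1) (he0 : η e0 = -1) (he1 : η e1 = -1) (he2 : η e2 = -1)
    (v : Fin 3 → F) :
    eval v (fermatSlice F d e0 e1 e2) = 0 ↔
      lineCharSum (e0 * v 0 + e1 * v 1) (e0 * v 0) =
        lineCharSum (e0 * v 0 + e1 * v 1) (-(e2 * v 2)) := by
  have hpow (x : F) : x ^ d = ((η x : ℤ) : F) :=
    hd ▸ (quadraticChar_eq_pow_of_char_ne_two' (by omega) x).symm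
  have hflip (e x : F) (he : η e = -1) : η x = -η (e * x) := by
    rw [map_mul, he]
    ring
  have h0 := quadraticChar_isQuadratic F (e0 * v 0)
  have h1 := quadraticChar_isQuadratic F (e1 * v 1)
  have h2 := quadraticChar_isQuadratic F (e2 * v 2)
  have h3 := quadraticChar_isQuadratic F (e0 * v 0 + e1 * v 1 + e2 * v 2)
  rw [eval_fermatSlice, hpow, hpow, hpow, hpow, hflip e0 (v 0) he0, hflip e1 (v 1) he1,
    hflip e2 (v 2) he2, ← Int.cast_add, ← Int.cast_add, ← Int.cast_add,
    intCast_eq_zero_iff_of_natAbs_lt (by omega), lineCharSum, lineCharSum,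
    show e0 * v 0 + e1 * v 1 - e0 * v 0 = e1 * v 1 by ring,
    show e0 * v 0 + e1 * v 1 - -(e2 * v 2) = e0 * v 0 + e1 * v 1 + e2 * v 2 by ring,
    quadraticChar_neg_of_neg_one hneg]
  omega

lemma card_fermatSlice_zeros (hF : 4 < ringChar F) (hd : Fintype.card F / 2 = d)
    (hneg : η (-1) = -1) (he0 : η e0 = -1) (he1 : η e1 = -1) (he2 : η e2 = -1) :
    #{v : Fin 3 → F | eval v (fermatSlice F d e0 e1 e2) = 0} =
      #{x : F × F × F | lineCharSum x.1 x.2.1 = lineCharSum x.1 x.2.2} := by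
  have hne {e : F} (he : η e = -1) : e ≠ 0 := by
    rintro rfl
    simp at he
  have hzero := eval_fermatSlice_eq_zero_iff hF hd hneg he0 he1 he2
  refine card_nbij' (fun v => (e0 * v 0 + e1 * v 1, e0 * v 0, -(e2 * v 2)))
    (fun x => ![e0⁻¹ * x.2.1, e1⁻¹ * (x.1 - x.2.1), -(e2⁻¹ * x.2.2)]) ?_ ?_ ?_ ?_
  · intro v hv
    simpa [hzero] using hv
  · intro x hx
    simpa [hzero, hne he0, hne he1, hne he2] using hx
  · intro v _
    funext i
    fin_cases i <;> simp [hne he0, hne he1, hne he2]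
  · intro x _
    simp [hne he0, hne he1, hne he2]

end FermatSlice

theorem statement16_general (p h : ℕ) (hp : Nat.Prime p) (hp3 : 3 < p)
    (F : Type) [Field F] [Fintype F] (hcard : Fintype.card F = p ^ h)
    (d : ℕ) (hd : p ^ h = 2 * d + 1) (hodd : Odd d) (e0 e1 e2 : F)
    (h0 : e0 ^ d = -1) (h1 : e1 ^ d = -1) (h2 : e2 ^ d = -1) :
    (8 * Nat.card {x : Projectivization F (Fin 3 → F) //
        MvPolynomial.eval x.rep (fermatSlice F d e0 e1 e2) = 0} : ℤ) =
      3 * (p ^ h : ℤ) ^ 2 - 6 * (p ^ h : ℤ) + 63 := by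
  classical
  have hchar : 4 < ringChar F := by
    have : p ≠ 4 := by rintro rfl; norm_num at hp
    rw [ringChar_eq_of_card_eq_pow hp hcard]
    omega
  have hq : 1 < Fintype.card F := Fintype.one_lt_card
  have hd' : Fintype.card F / 2 = d := by omega
  have hη {e : F} (he : e ^ d = -1) : quadraticChar F e = -1 :=
    quadraticChar_eq_neg_one_of_pow (by omega) (hd' ▸ he)
  have hneg := hη hodd.neg_one_pow
  have hproj := Projectivization.card_filter_eq_card_rep_mul_add_one (k := F)
    (fun v => eval v (fermatSlice F d e0 e1 e2) = 0)
    (by simp only [eval_fermatSlice, Pi.zero_apply, mul_zero, add_zero,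
      zero_pow (show d ≠ 0 by omega)])
    (fun c v hc => by simp [eval_smul_fermatSlice, hc])
  have hcount := card_lineCharSum_collisions hneg
  rw [← card_fermatSlice_zeros hchar hd' hneg (hη h0) (hη h1) (hη h2), hproj,
    Nat.card_eq_fintype_card (α := F)] at hcount
  push_cast [Nat.cast_sub hq.le] at hcount
  rw [show ((p : ℤ) ^ h) = Fintype.card F by exact_mod_cast hcard.symm]
  refine mul_left_cancel₀ (show 2 * ((Fintype.card F : ℤ) - 1) ≠ 0 by omega) ?_
  linear_combination hcount

/-- If `d` is odd and `η(e0) = η(e1) = η(e2) = -1`, then the number of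
points of `ℙ²(F_q)` on the curve `C = 0` equals `(3q² - 6q + 63)/8`
(i.e. `n(n + q - 1)/2 + 3q` with `n = (q-7)/2`). -/
theorem statement16 (p h : ℕ) (hp : Nat.Prime p) (hp3 : 3 < p) (hh : 0 < h)
    (F : Type) [Field F] [Fintype F] (hcard : Fintype.card F = p ^ h)
    (d : ℕ) (hd : p ^ h = 2 * d + 1) (hodd : Odd d) (e0 e1 e2 : F)
    (h0 : e0 ^ d = -1) (h1 : e1 ^ d = -1) (h2 : e2 ^ d = -1) :
    (8 * Nat.card {x : Projectivization F (Fin 3 → F) //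
        MvPolynomial.eval x.rep (fermatSlice F d e0 e1 e2) = 0} : ℤ) =
      3 * (p ^ h : ℤ) ^ 2 - 6 * (p ^ h : ℤ) + 63 :=
  statement16_general p h hp hp3 F hcard d hd hodd e0 e1 e2 h0 h1 h2
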